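/- Let (X, α) and (Y, β) be finite productive labelled transition systems over a finite nonempty alphabet A, and let x ∈ X and y ∈ Y. Then σ_ω '' str(x) = σ_ω '' str(y) holds for every nonempty complete metric space M and every contraction operator interpretation σ of A on M if and only if str(x) = str(y). (This is the semantic form of the paper's main theorem: two process terms are fractal equivalent if and only if they emit the same streams.) -/

import Mathlib

/-!
One direction is trivial. For the other, interpret each letter `a` on the Cantor space `ℕ → A`
(with the metric `2 ^ (-first index of difference)`) as the map prepending `a`: these maps are
`1/2`-contractions, the partial compositions `seqApp` along a stream `s` agree with `s` on longer
and longer prefixes, so `σ_ω` is the identity and fractal equivalence yields `str α x = str β y`.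
-/

open Filter Topology
open scoped NNReal

/-- `IsTrace α x w` : the word `w` labels a path starting at `x` in the LTS `(X, α)`. -/
inductive IsTrace {X A : Type} (α : X → Set (A × X)) : X → List A → Prop
  | nil (x : X) : IsTrace α x []
  | cons {x y : X} {a : A} {w : List A} :
      (a, y) ∈ α x → IsTrace α y w → IsTrace α x (a :: w)

/-- The trace set of a state `x`. -/
def tr {X A : Type} (α : X → Set (A × X)) (x : X) : Set (List A) :=
  {w | IsTrace α x w}

/-- The set of streams emitted by a state `x`. -/
def str {X A : Type} (α : X → Set (A × X)) (x : X) : Set (ℕ → A) :=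
  {s | ∀ n : ℕ, (List.ofFn fun i : Fin n => s i.val) ∈ tr α x}

/-- `seqApp σ s p n = (σ_{s 0} ∘ σ_{s 1} ∘ ⋯ ∘ σ_{s n}) p`. -/
def seqApp {A M : Type} (σ : A → M → M) (s : ℕ → A) (p : M) (n : ℕ) : M :=
  (List.ofFn fun i : Fin (n + 1) => s i.val).foldr (fun a m => σ a m) p

theorem seqApp_succ {A M : Type} (σ : A → M → M) (s : ℕ → A) (p : M) (n : ℕ) :
    seqApp σ s p (n + 1) = σ (s 0) (seqApp σ (fun k => s (k + 1)) p n) := by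
  rw [seqApp, List.ofFn_succ, List.foldr_cons]
  rfl

def prepend {A : Type} (a : A) (s : ℕ → A) : ℕ → A
  | 0 => a
  | n + 1 => s n

namespace PiNat

theorem prepend_mem_cylinder_succ {A : Type} {s t : ℕ → A} {n : ℕ}
    (h : t ∈ cylinder (fun k => s (k + 1)) n) : prepend (s 0) t ∈ cylinder s (n + 1) := by
  rw [mem_cylinder_iff] at h ⊢
  rintro (_ | i) hi
  · rfl
  · exact h i (Nat.lt_of_succ_lt_succ hi)

theorem seqApp_prepend_mem_cylinder {A : Type} (s p : ℕ → A) (n : ℕ) :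
    seqApp prepend s p n ∈ cylinder s (n + 1) := by
  induction n generalizing s with
  | zero => exact prepend_mem_cylinder_succ (by simp)
  | succ n ih =>
    rw [seqApp_succ]
    exact prepend_mem_cylinder_succ (ih _)

variable {A : Type} [TopologicalSpace A] [DiscreteTopology A]

attribute [local instance] PiNat.metricSpace

theorem lipschitzWith_prepend (a : A) : LipschitzWith (1 / 2) (prepend a) := by
  refine LipschitzWith.of_dist_le_mul fun s t => ?_
  rcases eq_or_ne s t with rfl | hst
  · simp
  have hcyl : prepend a s ∈ cylinder (prepend a t) (firstDiff s t + 1) :=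
    prepend_mem_cylinder_succ (mem_cylinder_firstDiff s t)
  rw [mem_cylinder_iff_dist_le] at hcyl
  rw [dist_eq_of_ne hst]
  calc dist (prepend a s) (prepend a t) ≤ (1 / 2) ^ (firstDiff s t + 1) := hcyl
    _ = _ := by rw [pow_succ]; push_cast; ring

theorem tendsto_seqApp_prepend (s p : ℕ → A) :
    Tendsto (seqApp prepend s p) atTop (𝓝 s) := by
  rw [tendsto_iff_dist_tendsto_zero]
  refine squeeze_zero (fun _ => dist_nonneg)
    (fun n => mem_cylinder_iff_dist_le.1 (seqApp_prepend_mem_cylinder s p n)) ?_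
  exact (tendsto_pow_atTop_nhds_zero_of_lt_one (by norm_num) (by norm_num)).comp
    (tendsto_add_atTop_nat 1)

end PiNat

theorem fractal_equiv_iff_str_eq_general {X Y A : Type}
    [Nonempty A]
    (α : X → Set (A × X))
    (β : Y → Set (A × Y))
    (x : X) (y : Y) :
    (∀ (M : Type) [MetricSpace M] [CompleteSpace M] [Nonempty M]
      (σ : A → M → M) (c : A → ℝ≥0), (∀ a, c a < 1) → (∀ a, LipschitzWith (c a) (σ a)) →
      ∀ σω : (ℕ → A) → M,
        (∀ (s : ℕ → A) (p : M), Tendsto (fun n => seqApp σ s p n) atTop (𝓝 (σω s))) →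
        σω '' str α x = σω '' str β y)
    ↔ str α x = str β y := by
  refine ⟨fun h => ?_, fun h _ _ _ _ _ _ _ _ σω _ => h ▸ rfl⟩
  let : TopologicalSpace A := ⊥
  have : DiscreteTopology A := ⟨rfl⟩
  let : MetricSpace (ℕ → A) := PiNat.metricSpace
  have : CompleteSpace (ℕ → A) := PiNat.completeSpace
  simpa using h (ℕ → A) prepend (fun _ => 1 / 2) (fun _ => by norm_num)
    PiNat.lipschitzWith_prepend id PiNat.tendsto_seqApp_prepend

/-- Fractal equivalence is stream (trace) equivalence: two states of finite
productive LTSs generate the same regular subfractal under every contraction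
operator interpretation on every nonempty complete metric space iff they emit
the same streams. -/
theorem fractal_equiv_iff_str_eq {X Y A : Type} [Finite X] [Finite Y]
    [Fintype A] [Nonempty A]
    (α : X → Set (A × X)) (hαfin : ∀ x, (α x).Finite) (hαprod : ∀ x, α x ≠ ∅)
    (β : Y → Set (A × Y)) (hβfin : ∀ y, (β y).Finite) (hβprod : ∀ y, β y ≠ ∅)
    (x : X) (y : Y) :
    (∀ (M : Type) [MetricSpace M] [CompleteSpace M] [Nonempty M]
      (σ : A → M → M) (c : A → ℝ≥0), (∀ a, c a < 1) → (∀ a, LipschitzWith (c a) (σ a)) →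
      ∀ σω : (ℕ → A) → M,
        (∀ (s : ℕ → A) (p : M), Tendsto (fun n => seqApp σ s p n) atTop (𝓝 (σω s))) →
        σω '' str α x = σω '' str β y)
    ↔ str α x = str β y :=
  fractal_equiv_iff_str_eq_general α β x y
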